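/- arXiv:2503.14747 — 2 statements merged into one kernel-verified Lean document; each statement's English description precedes it below -/
import Mathlib

section
/- Let {Vₙ} be a sequence of real random variables with Vₙ → V in probability, where the law of V has atoms only at points of a finite set D, and suppose sup_{t∈ℝ} |F_{Vₙ}(t) - F_V(t)| → 0 where F_{Vₙ}, F_V denote the CDFs. Then P({V ∈ D} ∩ {Vₙ ≠ V}) → 0 as n → ∞. -/
/-!
Fix `d` and `ε > 0`. On `{V = d, Vₙ ≠ V}` either `|Vₙ - V| ≥ ε`, an event of vanishing
probability, or `Vₙ` lies in `(d - ε, d)` or `(d, d + ε)`. Uniform closeness of the CDFs passes to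
the left limits `P(Vₙ < t)`, so it controls probabilities of open intervals: these two events have
probability at most `P(0 < |V - d| < ε)` up to a vanishing error, and that term tends to `0` as
`ε → 0` by continuity from above. Summing over the finitely many `d ∈ D` gives the theorem.
-/

open MeasureTheory Filter Set Topology

lemma setOf_lt_and_lt_eq_sdiff {Ω : Type*} (X : Ω → ℝ) (a b : ℝ) :
    {ω | a < X ω ∧ X ω < b} = {ω | X ω < b} \ {ω | X ω ≤ a} := by
  ext ω
  simp [and_comm]

section UniformCDF

variable {Ω : Type*} [MeasurableSpace Ω] {P : Measure Ω} [IsFiniteMeasure P] {X Y : Ω → ℝ}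
  {δ : ℝ}

lemma tendsto_measureReal_le_sub_inv_succ (t : ℝ) :
    Tendsto (fun k : ℕ => P.real {ω | X ω ≤ t - 1 / (k + 1)}) atTop
      (𝓝 (P.real {ω | X ω < t})) := by
  have hmono : Monotone fun k : ℕ => {ω | X ω ≤ t - 1 / (k + 1)} := fun k m hkm ω hω => by
    have : (1 : ℝ) / (m + 1) ≤ 1 / (k + 1) := Nat.one_div_le_one_div hkm
    simp only [mem_ofPred_eq] at hω ⊢
    linarith
  have hunion : ⋃ k : ℕ, {ω | X ω ≤ t - 1 / (k + 1)} = {ω | X ω < t} := by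
    ext ω
    simp only [mem_iUnion, mem_ofPred_eq]
    constructor
    · rintro ⟨k, hk⟩
      linarith [Nat.one_div_pos_of_nat (α := ℝ) (n := k)]
    · intro h
      obtain ⟨k, hk⟩ := exists_nat_one_div_lt (sub_pos.2 h)
      exact ⟨k, by linarith⟩
  have h := tendsto_measure_iUnion_atTop (μ := P) hmono
  rw [hunion] at h
  exact (ENNReal.tendsto_toReal (measure_ne_top _ _)).comp h

lemma abs_measureReal_lt_sub_le
    (hclose : ∀ t, |P.real {ω | X ω ≤ t} - P.real {ω | Y ω ≤ t}| ≤ δ) (t : ℝ) :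
    |P.real {ω | X ω < t} - P.real {ω | Y ω < t}| ≤ δ :=
  le_of_tendsto
    ((tendsto_measureReal_le_sub_inv_succ t).sub (tendsto_measureReal_le_sub_inv_succ t)).abs
    (Eventually.of_forall fun _ => hclose _)

lemma measureReal_Ioo_le_add (hX : Measurable X)
    (hclose : ∀ t, |P.real {ω | X ω ≤ t} - P.real {ω | Y ω ≤ t}| ≤ δ) {a b : ℝ} (hab : a < b) :
    P.real {ω | a < X ω ∧ X ω < b} ≤ P.real {ω | a < Y ω ∧ Y ω < b} + 2 * δ := by
  have hX_eq : P.real {ω | a < X ω ∧ X ω < b} = P.real {ω | X ω < b} - P.real {ω | X ω ≤ a} := by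
    rw [setOf_lt_and_lt_eq_sdiff]
    exact measureReal_sdiff (fun ω (h : X ω ≤ a) => h.trans_lt hab) (hX measurableSet_Iic)
  have hY_le : P.real {ω | Y ω < b} - P.real {ω | Y ω ≤ a} ≤ P.real {ω | a < Y ω ∧ Y ω < b} := by
    rw [setOf_lt_and_lt_eq_sdiff]
    exact le_measureReal_sdiff
  have hb := (abs_le.1 (abs_measureReal_lt_sub_le hclose b)).2
  have ha := (abs_le.1 (hclose a)).1
  linarith

end UniformCDF

lemma tendsto_measure_punctured_ball {Ω : Type*} [MeasurableSpace Ω] (P : Measure Ω)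
    [IsFiniteMeasure P] {X : Ω → ℝ} (hX : Measurable X) (d : ℝ) :
    Tendsto (fun ε => P {ω | X ω ≠ d ∧ |X ω - d| < ε}) (𝓝[>] 0) (𝓝 0) := by
  have h := tendsto_measure_biInter_gt (μ := P) (a := (0 : ℝ))
    (s := fun ε => {ω | X ω ≠ d ∧ |X ω - d| < ε})
    (fun _ _ => (measurableSet_setOfPred.2 (by fun_prop)).nullMeasurableSet)
    (fun _ _ _ hij _ hω => ⟨hω.1, hω.2.trans_le hij⟩) ⟨1, one_pos, measure_ne_top _ _⟩
  have hempty : ⋂ ε > (0 : ℝ), {ω | X ω ≠ d ∧ |X ω - d| < ε} = ∅ := by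
    refine eq_empty_of_forall_notMem fun ω hω => ?_
    simp only [mem_iInter, mem_ofPred_eq] at hω
    have hpos : 0 < |X ω - d| := abs_pos.2 (sub_ne_zero.2 (hω 1 one_pos).1)
    exact lt_irrefl _ (hω _ hpos).2
  rwa [hempty, measure_empty] at h

lemma setOf_eq_inter_setOf_ne_subset {Ω : Type*} (X Y : Ω → ℝ) (d ε : ℝ) :
    {ω | Y ω = d} ∩ {ω | X ω ≠ Y ω} ⊆ {ω | ε ≤ ‖X ω - Y ω‖} ∪
      ({ω | d - ε < X ω ∧ X ω < d} ∪ {ω | d < X ω ∧ X ω < d + ε}) := by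
  rintro ω ⟨hYd, hne⟩
  simp only [mem_ofPred_eq, mem_union, Real.norm_eq_abs] at hYd hne ⊢
  subst hYd
  rcases le_or_gt ε |X ω - Y ω| with hfar | hnear
  · exact Or.inl hfar
  · rw [abs_lt] at hnear
    rcases hne.lt_or_gt with hlt | hgt
    · exact Or.inr (Or.inl ⟨by linarith, hlt⟩)
    · exact Or.inr (Or.inr ⟨hgt, by linarith⟩)

lemma tendsto_measure_eq_inter_ne_of_uniform_cdf {Ω : Type*} [MeasurableSpace Ω]
    {P : Measure Ω} [IsFiniteMeasure P] {V : Ω → ℝ} {Vn : ℕ → Ω → ℝ} (hV : Measurable V)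
    (hVn : ∀ n, Measurable (Vn n)) (hprob : TendstoInMeasure P Vn atTop V)
    (hcdf : ∀ δ : ℝ, 0 < δ → ∀ᶠ n in atTop, ∀ t : ℝ,
      |P.real {ω | Vn n ω ≤ t} - P.real {ω | V ω ≤ t}| ≤ δ) (d : ℝ) :
    Tendsto (fun n => P ({ω | V ω = d} ∩ {ω | Vn n ω ≠ V ω})) atTop (𝓝 0) := by
  rw [← ENNReal.tendsto_toReal_zero_iff fun _ => measure_ne_top _ _]
  refine tendsto_order.2
    ⟨fun _ hη => .of_forall fun _ => hη.trans_le ENNReal.toReal_nonneg, fun η hη => ?_⟩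
  obtain ⟨ε, hε, hpunct⟩ : ∃ ε > 0, P.real {ω | V ω ≠ d ∧ |V ω - d| < ε} < η / 4 := by
    have h := (ENNReal.tendsto_toReal_zero_iff fun _ => measure_ne_top _ _).2
      (tendsto_measure_punctured_ball P hV d)
    exact ((h.eventually (gt_mem_nhds (by linarith))).and self_mem_nhdsWithin).exists.imp
      fun ε hε => ⟨hε.2, hε.1⟩
  have hfar := (tendstoInMeasure_iff_measureReal_norm.1 hprob ε hε).eventually
    (gt_mem_nhds (by linarith : (0 : ℝ) < η / 4))
  filter_upwards [hfar, hcdf (η / 16) (by linarith)] with n hfar hclose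
  have hleft : P.real {ω | d - ε < V ω ∧ V ω < d} ≤ P.real {ω | V ω ≠ d ∧ |V ω - d| < ε} :=
    measureReal_mono fun ω ⟨h₁, h₂⟩ => ⟨h₂.ne, by rw [abs_lt]; constructor <;> linarith⟩
  have hright : P.real {ω | d < V ω ∧ V ω < d + ε} ≤ P.real {ω | V ω ≠ d ∧ |V ω - d| < ε} :=
    measureReal_mono fun ω ⟨h₁, h₂⟩ => ⟨h₁.ne', by rw [abs_lt]; constructor <;> linarith⟩
  calc P.real ({ω | V ω = d} ∩ {ω | Vn n ω ≠ V ω})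
      ≤ P.real {ω | ε ≤ ‖Vn n ω - V ω‖} + (P.real {ω | d - ε < Vn n ω ∧ Vn n ω < d}
          + P.real {ω | d < Vn n ω ∧ Vn n ω < d + ε}) :=
        (measureReal_mono (setOf_eq_inter_setOf_ne_subset _ _ d ε)).trans
          ((measureReal_union_le _ _).trans (add_le_add_right (measureReal_union_le _ _) _))
    _ ≤ P.real {ω | ε ≤ ‖Vn n ω - V ω‖} + ((P.real {ω | d - ε < V ω ∧ V ω < d} + 2 * (η / 16))
          + (P.real {ω | d < V ω ∧ V ω < d + ε} + 2 * (η / 16))) := by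
        gcongr
        · exact measureReal_Ioo_le_add (hVn n) hclose (by linarith)
        · exact measureReal_Ioo_le_add (hVn n) hclose (by linarith)
    _ < η := by linarith

theorem stmt5_general {Ω : Type*} [MeasurableSpace Ω] (P : Measure Ω) [IsProbabilityMeasure P]
    (V : Ω → ℝ) (Vn : ℕ → Ω → ℝ) (hV : Measurable V) (hVn : ∀ n, Measurable (Vn n))
    (hprob : ∀ ε : ℝ, 0 < ε →
      Tendsto (fun n => P {ω | ε ≤ |Vn n ω - V ω|}) atTop (nhds 0))
    (D : Set ℝ) (hD : D.Finite)
    (hcdf : ∀ δ : ℝ, 0 < δ → ∃ N : ℕ, ∀ n ≥ N, ∀ t : ℝ,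
      |(P {ω | Vn n ω ≤ t}).toReal - (P {ω | V ω ≤ t}).toReal| ≤ δ) :
    Tendsto (fun n => P ({ω | V ω ∈ D} ∩ {ω | Vn n ω ≠ V ω})) atTop (nhds 0) := by
  have hatom := fun d => tendsto_measure_eq_inter_ne_of_uniform_cdf hV hVn
    (tendstoInMeasure_iff_norm.2 hprob) (fun δ hδ => eventually_atTop.2 (hcdf δ hδ)) d
  have hsum := tendsto_finsetSum hD.toFinset fun d _ => hatom d
  rw [Finset.sum_const_zero] at hsum
  refine tendsto_of_tendsto_of_tendsto_of_le_of_le tendsto_const_nhds hsum (fun _ => zero_le)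
    fun n => (measure_mono ?_).trans (measure_biUnion_finset_le hD.toFinset _)
  rintro ω ⟨hVD, hne⟩
  exact mem_biUnion (hD.mem_toFinset.2 hVD) ⟨rfl, hne⟩

/-- If `Vₙ → V` in probability, the law of `V` has atoms only at points of
a finite set `D`, and the CDFs of `Vₙ` converge to the CDF of `V` uniformly over `ℝ`,
then `P({V ∈ D} ∩ {Vₙ ≠ V}) → 0`. -/
theorem stmt5 {Ω : Type*} [MeasurableSpace Ω] (P : Measure Ω) [IsProbabilityMeasure P]
    (V : Ω → ℝ) (Vn : ℕ → Ω → ℝ) (hV : Measurable V) (hVn : ∀ n, Measurable (Vn n))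
    (hprob : ∀ ε : ℝ, 0 < ε →
      Tendsto (fun n => P {ω | ε ≤ |Vn n ω - V ω|}) atTop (nhds 0))
    (D : Set ℝ) (hD : D.Finite)
    (hatoms : ∀ x : ℝ, x ∉ D → P {ω | V ω = x} = 0)
    (hcdf : ∀ δ : ℝ, 0 < δ → ∃ N : ℕ, ∀ n ≥ N, ∀ t : ℝ,
      |(P {ω | Vn n ω ≤ t}).toReal - (P {ω | V ω ≤ t}).toReal| ≤ δ) :
    Tendsto (fun n => P ({ω | V ω ∈ D} ∩ {ω | Vn n ω ≠ V ω})) atTop (nhds 0) :=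
  stmt5_general P V Vn hV hVn hprob D hD hcdf
end

section
/- Let U₁,…,U_q be i.i.d. Uniform(0,1) random variables, let F_Y, F_X : ℝ → [0,1] be CDFs with F_Y(t) ≤ F_X(t) for all t ∈ ℝ, and let c ∈ ℝ. Define for a set A ⊆ ℝ the statistic T_A = sup_{t∈A} [(1/q_y)·#{j ≤ q_y : Uⱼ ≤ F_Y(t)} − (1/q_x)·#{q_y < j ≤ q : Uⱼ ≤ F_X(t)}]. Then P(T_ℝ > c) ≤ P(sup_{u∈(0,1)} Δ(u) > c), where Δ(u) = (1/q_y)·#{j ≤ q_y : Uⱼ ≤ u} − (1/q_x)·#{q_y < j ≤ q : Uⱼ ≤ u}. -/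
/-!
Outside a null event every `Uⱼ` lies in `(0,1)`. There, replacing `F_Y(t)` by the larger `F_X(t)`
can only raise the first count, so the statistic at `t` is at most `Δ(F_X(t))`; and since no `Uⱼ`
lies outside `(0,1)`, every threshold `v ∈ ℝ` can be moved into `(0,1)` without changing which
`Uⱼ` lie below it, so `Δ(v)` is one of the values `Δ(u)`, `u ∈ (0,1)`.
-/

open MeasureTheory ProbabilityTheory Filter Set Topology

lemma exists_mem_Ioo_forall_le_iff {ι : Type*} [Finite ι] {a b : ℝ} (hab : a < b)
    {x : ι → ℝ} (hx : ∀ j, x j ∈ Ioo a b) (v : ℝ) :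
    ∃ u ∈ Ioo a b, ∀ j, x j ≤ v ↔ x j ≤ u := by
  rcases lt_or_ge a v with hav | hva
  · rcases lt_or_ge v b with hvb | hbv
    · exact ⟨v, ⟨hav, hvb⟩, fun _ => Iff.rfl⟩
    · have hnear : ∀ᶠ u in 𝓝[<] b, u ∈ Ioo a b ∧ ∀ j, x j < u :=
        Eventually.and (Ioo_mem_nhdsLT hab) <| eventually_all.2 fun j =>
          mem_of_superset (Ioo_mem_nhdsLT (hx j).2) fun _ hu => hu.1
      obtain ⟨u, hu, hxu⟩ := hnear.exists
      exact ⟨u, hu, fun j => iff_of_true ((hx j).2.le.trans hbv) (hxu j).le⟩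
  · have hnear : ∀ᶠ u in 𝓝[>] a, u ∈ Ioo a b ∧ ∀ j, u < x j :=
      Eventually.and (Ioo_mem_nhdsGT hab) <| eventually_all.2 fun j =>
        mem_of_superset (Ioo_mem_nhdsGT (hx j).1) fun _ hu => hu.2
    obtain ⟨u, hu, hux⟩ := hnear.exists
    exact ⟨u, hu, fun j => iff_of_false (hva.trans_lt (hx j).1).not_ge (hux j).not_ge⟩

lemma ae_mem_of_map_eq_restrict {Ω α : Type*} [MeasurableSpace Ω] [MeasurableSpace α]
    {P : Measure Ω} {μ : Measure α} {X : Ω → α} {s : Set α} (hX : AEMeasurable X P)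
    (hs : MeasurableSet s) (hmap : P.map X = μ.restrict s) : ∀ᵐ ω ∂P, X ω ∈ s :=
  ae_of_ae_map hX (hmap ▸ ae_restrict_mem hs)

/-- The statistic at `t` is this at `(u, v) = (F_Y t, F_X t)`, and `Δ u` is this at `(u, u)`. -/
noncomputable def ecdfDiff (qy qx : ℕ) (x : Fin (qy + qx) → ℝ) (u v : ℝ) : ℝ :=
  ((Finset.univ.filter (fun j : Fin qy => x (Fin.castAdd qx j) ≤ u)).card : ℝ) / qy -
    ((Finset.univ.filter (fun j : Fin qx => x (Fin.natAdd qy j) ≤ v)).card : ℝ) / qx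

namespace ecdfDiff

variable {qy qx : ℕ} {x : Fin (qy + qx) → ℝ}

lemma monotone_left (v : ℝ) : Monotone fun u => ecdfDiff qy qx x u v := by
  intro u u' huu'
  simp only [ecdfDiff]
  gcongr

lemma le_one (u v : ℝ) : ecdfDiff qy qx x u v ≤ 1 :=
  (sub_le_self _ (by positivity)).trans <| div_le_one_of_le₀
    (by exact_mod_cast (Finset.card_filter_le _ _).trans_eq (Finset.card_fin qy)) qy.cast_nonneg

lemma exists_mem_Ioo_eq (hx : ∀ j, x j ∈ Ioo (0 : ℝ) 1) (v : ℝ) :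
    ∃ u ∈ Ioo (0 : ℝ) 1, ecdfDiff qy qx x v v = ecdfDiff qy qx x u u := by
  obtain ⟨u, hu, hxu⟩ := exists_mem_Ioo_forall_le_iff zero_lt_one hx v
  exact ⟨u, hu, by simp only [ecdfDiff, hxu]⟩

lemma iSup_le_sSup_image_Ioo (hx : ∀ j, x j ∈ Ioo (0 : ℝ) 1) {FY FX : ℝ → ℝ}
    (hdom : ∀ t, FY t ≤ FX t) :
    ⨆ t, ecdfDiff qy qx x (FY t) (FX t) ≤
      sSup ((fun u => ecdfDiff qy qx x u u) '' Ioo (0 : ℝ) 1) := by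
  have hbdd : BddAbove ((fun u => ecdfDiff qy qx x u u) '' Ioo (0 : ℝ) 1) :=
    ⟨1, forall_mem_image.2 fun u _ => le_one u u⟩
  refine ciSup_le fun t => ?_
  obtain ⟨u, hu, hΔ⟩ := exists_mem_Ioo_eq hx (FX t)
  calc ecdfDiff qy qx x (FY t) (FX t)
      ≤ ecdfDiff qy qx x (FX t) (FX t) := monotone_left (FX t) (hdom t)
    _ = ecdfDiff qy qx x u u := hΔ
    _ ≤ _ := le_csSup hbdd (mem_image_of_mem _ hu)

end ecdfDiff

theorem stmt10_general {Ω : Type*} [MeasurableSpace Ω] (P : Measure Ω)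
    (qy qx : ℕ)
    (U : Fin (qy + qx) → Ω → ℝ) (hmeas : ∀ j, Measurable (U j))
    (hunif : ∀ j, Measure.map (U j) P = volume.restrict (Set.Ioo (0 : ℝ) 1))
    (FY FX : ℝ → ℝ)
    (hdom : ∀ t, FY t ≤ FX t) (c : ℝ) :
    P {ω | c < ⨆ t : ℝ,
        (((Finset.univ.filter
            (fun j : Fin qy => U (Fin.castAdd qx j) ω ≤ FY t)).card : ℝ) / qy -
          ((Finset.univ.filter
            (fun j : Fin qx => U (Fin.natAdd qy j) ω ≤ FX t)).card : ℝ) / qx)} ≤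
      P {ω | c < sSup ((fun u : ℝ =>
          ((Finset.univ.filter
            (fun j : Fin qy => U (Fin.castAdd qx j) ω ≤ u)).card : ℝ) / qy -
            ((Finset.univ.filter
            (fun j : Fin qx => U (Fin.natAdd qy j) ω ≤ u)).card : ℝ) / qx) ''
          Set.Ioo (0 : ℝ) 1)} := by
  have hU : ∀ᵐ ω ∂P, ∀ j, U j ω ∈ Ioo (0 : ℝ) 1 := ae_all_iff.2 fun j =>
    ae_mem_of_map_eq_restrict (hmeas j).aemeasurable measurableSet_Ioo (hunif j)
  refine measure_mono_ae (hU.mono fun ω hω hc => ?_)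
  exact hc.trans_le (ecdfDiff.iSup_le_sSup_image_Ioo (x := fun j => U j ω) hω hdom)

/-- Core size-control inequality. For i.i.d. `U(0,1)` variables
`U₁,…,U_q` (`q = q_y + q_x`) and CDFs `F_Y ≤ F_X` pointwise,
`P(sup_{t∈ℝ} [(1/q_y)#{j ≤ q_y : U_j ≤ F_Y(t)} − (1/q_x)#{j > q_y : U_j ≤ F_X(t)}] > c)
  ≤ P(sup_{u∈(0,1)} Δ(u) > c)`. -/
theorem stmt10 {Ω : Type*} [MeasurableSpace Ω] (P : Measure Ω) [IsProbabilityMeasure P]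
    (qy qx : ℕ) (hqy : 0 < qy) (hqx : 0 < qx)
    (U : Fin (qy + qx) → Ω → ℝ) (hmeas : ∀ j, Measurable (U j))
    (hindep : iIndepFun U P)
    (hunif : ∀ j, Measure.map (U j) P = volume.restrict (Set.Ioo (0 : ℝ) 1))
    (FY FX : ℝ → ℝ) (hFYmono : Monotone FY) (hFXmono : Monotone FX)
    (hFY01 : ∀ t, FY t ∈ Set.Icc (0 : ℝ) 1) (hFX01 : ∀ t, FX t ∈ Set.Icc (0 : ℝ) 1)
    (hdom : ∀ t, FY t ≤ FX t) (c : ℝ) :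
    P {ω | c < ⨆ t : ℝ,
        (((Finset.univ.filter
            (fun j : Fin qy => U (Fin.castAdd qx j) ω ≤ FY t)).card : ℝ) / qy -
          ((Finset.univ.filter
            (fun j : Fin qx => U (Fin.natAdd qy j) ω ≤ FX t)).card : ℝ) / qx)} ≤
      P {ω | c < sSup ((fun u : ℝ =>
          ((Finset.univ.filter
            (fun j : Fin qy => U (Fin.castAdd qx j) ω ≤ u)).card : ℝ) / qy -
            ((Finset.univ.filter
            (fun j : Fin qx => U (Fin.natAdd qy j) ω ≤ u)).card : ℝ) / qx) ''
          Set.Ioo (0 : ℝ) 1)} :=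
  stmt10_general P qy qx U hmeas hunif FY FX hdom c
end
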